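/- arXiv:0804.3071 — 2 statements merged into one kernel-verified Lean document; each statement's English description precedes it below -/
import Mathlib

section
/- The stochastic matrices P^{S,t}_{t+} and P^{S,t}_{S-} commute: P^{S,t}_{t+} · P^{S,t+1}_{S-} = P^{S,t}_{S-} · P^{S-1,t}_{t+}, as equality of matrices on 𝒳^{S,t} × 𝒳^{S-1,t+1}. -/
/-!
Both sides are sums over an intermediate configuration `Z` of a product of two kernels. In each
product the Vandermonde factor `pairProd Z` cancels, leaving a constant (the same on both sides)
times a product of one-particle weights. These weights vanish exactly on the moves that would leave
the state space, so each side becomes a sum over strictly increasing `Z` with `Z i ∈ {X i, X i + 1}`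
(left) or `Z i ∈ {X i - 1, X i}` (right). Such a sum obeys a three-term recurrence in the number of
particles whose coefficients are the one-site sums of weights and, where `X (i + 1) = X i + 1`, the
weight of the one colliding pattern of two neighbours. Two one-site identities show that these
coefficients agree on both sides.
-/

open Finset

noncomputable def poch (a : ℝ) (n : ℕ) : ℝ := ∏ k ∈ Finset.range n, (a + k)

noncomputable def pairProd {N : ℕ} (f : Fin N → ℤ) : ℝ :=
  ∏ p ∈ Finset.univ.filter (fun p : Fin N × Fin N => p.1 < p.2), ((f p.2 - f p.1 : ℤ) : ℝ)

noncomputable def secX (N T S t : ℕ) : Finset ℤ :=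
  Finset.Icc (max 0 ((t : ℤ) + S - T)) (min ((t : ℤ) + N - 1) ((S : ℤ) + N - 1))

noncomputable def Xcal (N T S t : ℕ) : Finset (Fin N → ℤ) :=
  (Fintype.piFinset fun _ => secX N T S t).filter
    (fun f => ∀ i j : Fin N, i < j → f i < f j)

noncomputable def Ptp (N T S t : ℕ) (X Y : Fin N → ℤ) : ℝ :=
  if ∀ i, Y i = X i ∨ Y i = X i + 1 then
    (pairProd Y *
      ∏ i, (if Y i = X i + 1 then (N : ℝ) + S - X i - 1 else (X i : ℝ) + T - t - S)) /
      (poch ((T : ℝ) - t) N * pairProd X)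
  else 0

noncomputable def PSm (N T S t : ℕ) (X Y : Fin N → ℤ) : ℝ :=
  if ∀ i, Y i = X i ∨ Y i = X i - 1 then
    (pairProd Y *
      ∏ i, (if Y i = X i - 1 then (X i : ℝ) else (S : ℝ) + N - 1 - X i)) /
      (poch (S : ℝ) N * pairProd X)
  else 0

lemma Finset.sum_congr_of_ne_zero {α M : Type*} [AddCommMonoid M] {s t : Finset α} {f : α → M}
    (h : ∀ a, f a ≠ 0 → (a ∈ s ↔ a ∈ t)) : ∑ a ∈ s, f a = ∑ a ∈ t, f a :=
  sum_bij_ne_zero (fun a _ _ => a) (fun a ha hf => (h a hf).1 ha) (fun _ _ _ _ _ _ h => h)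
    (fun a ha hf => ⟨a, (h a hf).2 ha, hf, rfl⟩) fun _ _ _ => rfl

lemma StrictMono.comp_add_right {α : Type*} [Preorder α] {f : ℕ → α} (hf : StrictMono f)
    (k : ℕ) : StrictMono fun m => f (m + k) :=
  hf.comp fun _ _ h => Nat.add_lt_add_right h k

section ShiftGrid

variable {R : Type*} [CommRing R]

noncomputable def shiftGrid (a : ℕ → ℤ) (n : ℕ) : Finset (Fin n → ℤ) :=
  {Z ∈ Fintype.piFinset fun i : Fin n => {a i, a i + 1} | StrictMono Z}

noncomputable def shiftGridSum (a : ℕ → ℤ) (w : ℕ → ℤ → R) (n : ℕ) : R :=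
  ∑ Z ∈ shiftGrid a n, ∏ i : Fin n, w i (Z i)

lemma mem_shiftGrid {a : ℕ → ℤ} {n : ℕ} {Z : Fin n → ℤ} :
    Z ∈ shiftGrid a n ↔ (∀ i, Z i = a i ∨ Z i = a i + 1) ∧ StrictMono Z := by
  simp [shiftGrid]

lemma le_of_mem_shiftGrid {a : ℕ → ℤ} {n : ℕ} {Z : Fin n → ℤ} (hZ : Z ∈ shiftGrid a n)
    (i : Fin n) : a i ≤ Z i := by
  rcases (mem_shiftGrid.mp hZ).1 i with h | h <;> omega

lemma cons_mem_shiftGrid {a : ℕ → ℤ} {n : ℕ} {v : ℤ} {Z : Fin n → ℤ} :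
    Fin.cons v Z ∈ shiftGrid a (n + 1) ↔
      (v = a 0 ∨ v = a 0 + 1) ∧ Z ∈ shiftGrid (fun m => a (m + 1)) n ∧ ∀ j, v < Z j := by
  simp only [mem_shiftGrid, Fin.forall_fin_succ, Fin.cons_zero, Fin.cons_succ,
    Fin.strictMono_cons]
  tauto

lemma sum_shiftGrid_succ (a : ℕ → ℤ) (n : ℕ) (f : (Fin (n + 1) → ℤ) → R) :
    ∑ Z ∈ shiftGrid a (n + 1), f Z =
      ∑ v ∈ {a 0, a 0 + 1}, ∑ Z ∈ shiftGrid (fun m => a (m + 1)) n with ∀ j, v < Z j,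
        f (Fin.cons v Z) := by
  rw [sum_sigma']
  refine sum_nbij' (fun Z => ⟨Z 0, Fin.tail Z⟩) (fun p => Fin.cons p.1 p.2) ?_ ?_
    (fun Z _ => by simp) (fun p _ => by simp) fun Z _ => by simp
  · intro Z hZ
    rw [← Fin.cons_self_tail Z, cons_mem_shiftGrid] at hZ
    simpa [hZ.2.1] using hZ
  · rintro ⟨v, Z⟩ h
    simp only [mem_sigma, mem_insert, mem_singleton, mem_filter] at h
    simp [cons_mem_shiftGrid, h]

noncomputable def shiftGridSumAbove (a : ℕ → ℤ) (w : ℕ → ℤ → R) (n : ℕ) (v : ℤ) : R :=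
  ∑ Z ∈ shiftGrid a n with ∀ j, v < Z j, ∏ i : Fin n, w i (Z i)

variable {a : ℕ → ℤ} {w : ℕ → ℤ → R} {n : ℕ}

@[simp]
lemma shiftGridSum_zero : shiftGridSum a w 0 = 1 := by
  simp [shiftGridSum, shiftGrid, Subsingleton.strictMono]

lemma shiftGridSum_succ : shiftGridSum a w (n + 1) =
    w 0 (a 0) * shiftGridSumAbove (fun m => a (m + 1)) (fun m => w (m + 1)) n (a 0) +
      w 0 (a 0 + 1) * shiftGridSumAbove (fun m => a (m + 1)) (fun m => w (m + 1)) n (a 0 + 1) := by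
  rw [shiftGridSum, sum_shiftGrid_succ, sum_pair (by omega)]
  simp [shiftGridSumAbove, Fin.prod_univ_succ, mul_sum]

lemma shiftGridSumAbove_of_lt (ha : Monotone a) {v : ℤ} (hv : v < a 0) :
    shiftGridSumAbove a w n v = shiftGridSum a w n := by
  refine sum_congr (filter_true_of_mem fun Z hZ j => ?_) fun _ _ => rfl
  exact hv.trans_le ((ha (Nat.zero_le _)).trans (le_of_mem_shiftGrid hZ j))

lemma shiftGridSumAbove_succ_self :
    shiftGridSumAbove a w (n + 1) (a 0) =
      w 0 (a 0 + 1) * shiftGridSumAbove (fun m => a (m + 1)) (fun m => w (m + 1)) n (a 0 + 1) := by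
  rw [shiftGridSumAbove, sum_filter, sum_shiftGrid_succ, sum_pair (by omega)]
  simp only [Fin.forall_fin_succ, Fin.cons_zero, Fin.cons_succ, lt_irrefl, false_and,
    if_false, sum_const_zero, zero_add, shiftGridSumAbove, sum_filter, mul_sum]
  refine sum_congr rfl fun Z _ => ?_
  by_cases h : ∀ j, a 0 + 1 < Z j
  · simp [h, fun j => (lt_add_one (a 0)).trans (h j), Fin.prod_univ_succ]
  · simp [h]

/-- The subtracted term removes the tuples starting with the collision `Z 0 = Z 1 = a 1`. -/
lemma shiftGridSum_succ_succ (ha : StrictMono a) :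
    shiftGridSum a w (n + 2) =
      (w 0 (a 0) + w 0 (a 0 + 1)) *
          shiftGridSum (fun m => a (m + 1)) (fun m => w (m + 1)) (n + 1) -
        if a 1 = a 0 + 1 then
          w 0 (a 0 + 1) * w 1 (a 1) * shiftGridSum (fun m => a (m + 2)) (fun m => w (m + 2)) n
        else 0 := by
  have ha' := ha.comp_add_right 1
  have ha'' := ha.comp_add_right 2
  have h01 : a 0 < a 1 := ha zero_lt_one
  have h12 : a 1 < a 2 := ha one_lt_two
  rw [shiftGridSum_succ, shiftGridSumAbove_of_lt ha'.monotone h01]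
  split_ifs with hadj
  · have htail := shiftGridSum_succ (a := fun m => a (m + 1)) (w := fun m => w (m + 1)) (n := n)
    have hself := shiftGridSumAbove_succ_self (a := fun m => a (m + 1)) (w := fun m => w (m + 1))
      (n := n)
    simp only [zero_add, add_assoc, Nat.reduceAdd] at htail hself
    rw [shiftGridSumAbove_of_lt ha''.monotone h12] at htail
    rw [← hadj, hself]
    linear_combination (-w 0 (a 1)) * htail
  · rw [shiftGridSumAbove_of_lt ha'.monotone (show a 0 + 1 < a 1 by omega)]
    ring

lemma shiftGridSum_one : shiftGridSum a w 1 = w 0 (a 0) + w 0 (a 0 + 1) := by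
  simp [shiftGridSum_succ, shiftGridSumAbove, shiftGrid, Subsingleton.strictMono]

theorem shiftGridSum_eq_of_local {a b : ℕ → ℤ} (ha : StrictMono a) (hb : StrictMono b)
    {v w : ℕ → ℤ → R}
    (hadj : ∀ m, a (m + 1) = a m + 1 ↔ b (m + 1) = b m + 1)
    (hsum : ∀ m, v m (a m) + v m (a m + 1) = w m (b m) + w m (b m + 1))
    (hprod : ∀ m, a (m + 1) = a m + 1 →
      v m (a m + 1) * v (m + 1) (a (m + 1)) = w m (b m + 1) * w (m + 1) (b (m + 1)))
    (n : ℕ) : shiftGridSum a v n = shiftGridSum b w n := by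
  induction n using Nat.strong_induction_on generalizing a b v w with
  | _ n ih =>
    match n with
    | 0 => simp
    | 1 => rw [shiftGridSum_one, shiftGridSum_one, hsum 0]
    | n + 2 =>
      rw [shiftGridSum_succ_succ ha, shiftGridSum_succ_succ hb, hsum 0,
        ih (n + 1) (by omega) (ha.comp_add_right 1) (hb.comp_add_right 1) (fun m => hadj (m + 1))
          (fun m => hsum (m + 1)) (fun m => hprod (m + 1)),
        ih n (by omega) (ha.comp_add_right 2) (hb.comp_add_right 2) (fun m => hadj (m + 2))
          (fun m => hsum (m + 2)) (fun m => hprod (m + 2))]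
      by_cases h : a 1 = a 0 + 1
      · rw [if_pos h, if_pos ((hadj 0).1 h), hprod 0 h]
      · rw [if_neg h, if_neg (mt (hadj 0).2 h)]

end ShiftGrid

section Kernels

variable {N T S t : ℕ}

def ptpWeight (N T S t : ℕ) (x z : ℤ) : ℤ :=
  if z = x + 1 then N + S - x - 1 else if z = x then x + T - t - S else 0

def psmWeight (N S : ℕ) (x z : ℤ) : ℤ :=
  if z = x - 1 then x else if z = x then S + N - 1 - x else 0

lemma Ptp_eq_mul_prod (X Y : Fin N → ℤ) :
    Ptp N T S t X Y = pairProd Y / (poch ((T : ℝ) - t) N * pairProd X) *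
      ∏ i, (ptpWeight N T S t (X i) (Y i) : ℝ) := by
  unfold Ptp
  split_ifs with h
  · rw [mul_div_right_comm]
    congr 1
    refine prod_congr rfl fun i _ => ?_
    rcases h i with h | h <;> simp [ptpWeight, h]
  · push Not at h
    obtain ⟨i, h1, h2⟩ := h
    rw [prod_eq_zero (mem_univ i) (by simp [ptpWeight, h1, h2]), mul_zero]

lemma PSm_eq_mul_prod (X Y : Fin N → ℤ) :
    PSm N T S t X Y = pairProd Y / (poch (S : ℝ) N * pairProd X) *
      ∏ i, (psmWeight N S (X i) (Y i) : ℝ) := by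
  unfold PSm
  split_ifs with h
  · rw [mul_div_right_comm]
    congr 1
    refine prod_congr rfl fun i _ => ?_
    rcases h i with h | h <;> simp [psmWeight, h]
  · push Not at h
    obtain ⟨i, h1, h2⟩ := h
    rw [prod_eq_zero (mem_univ i) (by simp [psmWeight, h1, h2]), mul_zero]

lemma ptpWeight_ne_zero_of_Ptp_ne_zero {X Y : Fin N → ℤ} (h : Ptp N T S t X Y ≠ 0)
    (i : Fin N) :
    ptpWeight N T S t (X i) (Y i) ≠ 0 := by
  rw [Ptp_eq_mul_prod] at h
  exact_mod_cast prod_ne_zero_iff.mp (right_ne_zero_of_mul h) i (mem_univ i)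

lemma psmWeight_ne_zero_of_PSm_ne_zero {X Y : Fin N → ℤ} (h : PSm N T S t X Y ≠ 0)
    (i : Fin N) :
    psmWeight N S (X i) (Y i) ≠ 0 := by
  rw [PSm_eq_mul_prod] at h
  exact_mod_cast prod_ne_zero_iff.mp (right_ne_zero_of_mul h) i (mem_univ i)

lemma mem_secX_succ_of_ptpWeight_ne_zero {x z : ℤ} (hx : x ∈ secX N T S t)
    (h : ptpWeight N T S t x z ≠ 0) :
    (z = x ∨ z = x + 1) ∧ z ∈ secX N T S (t + 1) := by
  simp only [secX, mem_Icc] at hx ⊢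
  unfold ptpWeight at h
  split_ifs at h <;> omega

lemma mem_secX_pred_of_psmWeight_ne_zero (hS : 1 ≤ S) {x z : ℤ} (hx : x ∈ secX N T S t)
    (h : psmWeight N S x z ≠ 0) :
    (z = x - 1 ∨ z = x) ∧ z ∈ secX N T (S - 1) t := by
  simp only [secX, mem_Icc] at hx ⊢
  unfold psmWeight at h
  split_ifs at h <;> omega

section Evaluation

variable {x z : ℤ}

lemma ptpWeight_of_eq_add_one (h : z = x + 1) : ptpWeight N T S t x z = N + S - x - 1 :=
  if_pos h

lemma ptpWeight_of_eq (h : z = x) : ptpWeight N T S t x z = x + T - t - S := by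
  rw [ptpWeight, if_neg (by omega), if_pos h]

lemma ptpWeight_of_ne (h₁ : z ≠ x + 1) (h₂ : z ≠ x) : ptpWeight N T S t x z = 0 := by
  rw [ptpWeight, if_neg h₁, if_neg h₂]

lemma psmWeight_of_eq_sub_one (h : z = x - 1) : psmWeight N S x z = x :=
  if_pos h

lemma psmWeight_of_eq (h : z = x) : psmWeight N S x z = S + N - 1 - x := by
  rw [psmWeight, if_neg (by omega), if_pos h]

lemma psmWeight_of_ne (h₁ : z ≠ x - 1) (h₂ : z ≠ x) : psmWeight N S x z = 0 := by
  rw [psmWeight, if_neg h₁, if_neg h₂]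

end Evaluation

lemma ptpWeight_psmWeight_sum_comm (hS : 1 ≤ S) (x y : ℤ) :
    ptpWeight N T S t x x * psmWeight N S x y +
        ptpWeight N T S t x (x + 1) * psmWeight N S (x + 1) y =
      psmWeight N S x (x - 1) * ptpWeight N T (S - 1) t (x - 1) y +
        psmWeight N S x x * ptpWeight N T (S - 1) t x y := by
  have hS' : ((S - 1 : ℕ) : ℤ) = S - 1 := by omega
  rcases (by omega : y = x - 1 ∨ y = x ∨ y = x + 1 ∨ y ≠ x - 1 ∧ y ≠ x ∧ y ≠ x + 1) with
    rfl | rfl | rfl | h <;>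
  · simp (disch := omega) only [ptpWeight_of_eq_add_one, ptpWeight_of_eq, ptpWeight_of_ne,
      psmWeight_of_eq_sub_one, psmWeight_of_eq, psmWeight_of_ne, hS']
    ring

lemma ptpWeight_psmWeight_adjacent_comm (hS : 1 ≤ S) {x y y' : ℤ} (hy : y < y') :
    ptpWeight N T S t x (x + 1) * psmWeight N S (x + 1) y *
        (ptpWeight N T S t (x + 1) (x + 1) * psmWeight N S (x + 1) y') =
      psmWeight N S x x * ptpWeight N T (S - 1) t x y *
        (psmWeight N S (x + 1) x * ptpWeight N T (S - 1) t x y') := by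
  have hS' : ((S - 1 : ℕ) : ℤ) = S - 1 := by omega
  by_cases h : y = x ∧ y' = x + 1
  · obtain ⟨rfl, rfl⟩ := h
    simp (disch := omega) only [ptpWeight_of_eq_add_one, ptpWeight_of_eq,
      psmWeight_of_eq_sub_one, psmWeight_of_eq, hS']
    ring
  · rcases (by omega : (y ≠ x ∧ y ≠ x + 1) ∨ (y' ≠ x ∧ y' ≠ x + 1)) with h | h <;>
    simp (disch := omega) only [psmWeight_of_ne, ptpWeight_of_ne, mul_zero, zero_mul]

lemma mem_Xcal {Z : Fin N → ℤ} :
    Z ∈ Xcal N T S t ↔ (∀ i, Z i ∈ secX N T S t) ∧ StrictMono Z := by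
  simp [Xcal, StrictMono]

lemma pairProd_ne_zero {Z : Fin N → ℤ} (hZ : StrictMono Z) : pairProd Z ≠ 0 :=
  prod_ne_zero_iff.mpr fun p hp => by
    have := hZ (mem_filter.mp hp).2
    exact_mod_cast sub_ne_zero.mpr this.ne'

lemma Ptp_mul_PSm {X Y Z : Fin N → ℤ} (hZ : StrictMono Z) (S' t' : ℕ) :
    Ptp N T S t X Z * PSm N T S' t' Z Y =
      pairProd Y / (poch ((T : ℝ) - t) N * poch (S' : ℝ) N * pairProd X) *
        ∏ i, ((ptpWeight N T S t (X i) (Z i) * psmWeight N S' (Z i) (Y i) : ℤ) : ℝ) := by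
  have := pairProd_ne_zero hZ
  rw [Ptp_eq_mul_prod, PSm_eq_mul_prod]
  push_cast
  rw [prod_mul_distrib]
  field_simp

lemma PSm_mul_Ptp {X Y Z : Fin N → ℤ} (hZ : StrictMono Z) (T' S' t' : ℕ) :
    PSm N T S t X Z * Ptp N T' S' t' Z Y =
      pairProd Y / (poch (S : ℝ) N * poch ((T' : ℝ) - t') N * pairProd X) *
        ∏ i, ((psmWeight N S (X i) (Z i) * ptpWeight N T' S' t' (Z i) (Y i) : ℤ) : ℝ) := by
  have := pairProd_ne_zero hZ
  rw [Ptp_eq_mul_prod, PSm_eq_mul_prod]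
  push_cast
  rw [prod_mul_distrib]
  field_simp

lemma sum_Xcal_Ptp_mul {X : Fin N → ℤ} (hX : X ∈ Xcal N T S t) {x : ℕ → ℤ}
    (hx : ∀ i : Fin N, x i = X i) (f : (Fin N → ℤ) → ℝ) :
    ∑ Z ∈ Xcal N T S (t + 1), Ptp N T S t X Z * f Z =
      ∑ Z ∈ shiftGrid x N, Ptp N T S t X Z * f Z := by
  refine sum_congr_of_ne_zero fun Z h => ?_
  have key i : (Z i = x i ∨ Z i = x i + 1) ∧ Z i ∈ secX N T S (t + 1) := by
    rw [hx]
    exact mem_secX_succ_of_ptpWeight_ne_zero ((mem_Xcal.mp hX).1 i)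
      (ptpWeight_ne_zero_of_Ptp_ne_zero (left_ne_zero_of_mul h) i)
  rw [mem_Xcal, mem_shiftGrid]
  exact and_congr_left' ⟨fun _ i => (key i).1, fun _ i => (key i).2⟩

lemma sum_Xcal_PSm_mul (hS : 1 ≤ S) {X : Fin N → ℤ} (hX : X ∈ Xcal N T S t) {x : ℕ → ℤ}
    (hx : ∀ i : Fin N, x i = X i) (f : (Fin N → ℤ) → ℝ) :
    ∑ Z ∈ Xcal N T (S - 1) t, PSm N T S t X Z * f Z =
      ∑ Z ∈ shiftGrid (fun m => x m - 1) N, PSm N T S t X Z * f Z := by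
  refine sum_congr_of_ne_zero fun Z h => ?_
  have key i : (Z i = x i - 1 ∨ Z i = x i - 1 + 1) ∧ Z i ∈ secX N T (S - 1) t := by
    rw [hx, sub_add_cancel]
    exact mem_secX_pred_of_psmWeight_ne_zero hS ((mem_Xcal.mp hX).1 i)
      (psmWeight_ne_zero_of_PSm_ne_zero (left_ne_zero_of_mul h) i)
  rw [mem_Xcal, mem_shiftGrid]
  exact and_congr_left' ⟨fun _ i => (key i).1, fun _ i => (key i).2⟩

end Kernels

lemma StrictMono.exists_extend_nat {N : ℕ} {X : Fin N → ℤ} (hX : StrictMono X) :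
    ∃ x : ℕ → ℤ, StrictMono x ∧ ∀ i : Fin N, x i = X i := by
  set C := ∑ i, |X i|
  have hC : ∀ i, X i ≤ C := fun i =>
    (le_abs_self _).trans (single_le_sum (fun j _ => abs_nonneg (X j)) (mem_univ i))
  refine ⟨fun m => if h : m < N then X ⟨m, h⟩ else m + C, strictMono_nat_of_lt_succ fun m => ?_,
    fun i => dif_pos i.2⟩
  by_cases h₁ : m + 1 < N
  · simp only [dif_pos h₁, dif_pos (Nat.lt_of_succ_lt h₁)]
    exact hX (Fin.mk_lt_mk.mpr m.lt_succ_self)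
  by_cases h₀ : m < N
  · simp only [dif_pos h₀, dif_neg h₁]
    have := hC ⟨m, h₀⟩
    push_cast
    omega
  · simp only [dif_neg h₀, dif_neg h₁]
    push_cast
    omega

theorem P_commutation_general (N T S t : ℕ) (hS1 : 1 ≤ S)
    (X : Fin N → ℤ) (hX : X ∈ Xcal N T S t)
    (Y : Fin N → ℤ) (hY : Y ∈ Xcal N T (S - 1) (t + 1)) :
    ∑ Z ∈ Xcal N T S (t + 1), Ptp N T S t X Z * PSm N T S (t + 1) Z Y =
      ∑ Z ∈ Xcal N T (S - 1) t, PSm N T S t X Z * Ptp N T (S - 1) t Z Y := by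
  obtain ⟨x, hx, hxX⟩ := (mem_Xcal.mp hX).2.exists_extend_nat
  obtain ⟨y, hy, hyY⟩ := (mem_Xcal.mp hY).2.exists_extend_nat
  rw [sum_Xcal_Ptp_mul hX hxX, sum_Xcal_PSm_mul hS1 hX hxX,
    sum_congr rfl fun Z hZ => Ptp_mul_PSm (mem_shiftGrid.mp hZ).2 _ _,
    sum_congr rfl fun Z hZ => PSm_mul_Ptp (mem_shiftGrid.mp hZ).2 _ _ _,
    ← mul_sum, ← mul_sum, mul_comm (poch (S : ℝ) N)]
  congr 1
  have hx' : StrictMono fun m => x m - 1 := fun _ _ h => by simpa using hx h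
  have hcomm := shiftGridSum_eq_of_local hx hx'
    (v := fun m z => ptpWeight N T S t (x m) z * psmWeight N S z (y m))
    (w := fun m z => psmWeight N S (x m) z * ptpWeight N T (S - 1) t z (y m))
    (fun m => by omega)
    (fun m => by
      rw [sub_add_cancel]
      exact ptpWeight_psmWeight_sum_comm hS1 (x m) (y m))
    (fun m h => by
      rw [h, sub_add_cancel, add_sub_cancel_right]
      exact ptpWeight_psmWeight_adjacent_comm hS1 (hy m.lt_succ_self)) N
  simp only [shiftGridSum, ← hxX, ← hyY] at hcomm ⊢
  exact_mod_cast hcomm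

/-- Commutativity P^{S,t}_{t+} · P^{S,t+1}_{S-} = P^{S,t}_{S-} · P^{S-1,t}_{t+}
as matrices on 𝒳^{S,t} × 𝒳^{S-1,t+1}. -/
theorem P_commutation (N T S t : ℕ) (hN : 1 ≤ N) (hS1 : 1 ≤ S) (hS : S ≤ T) (ht : t < T)
    (X : Fin N → ℤ) (hX : X ∈ Xcal N T S t)
    (Y : Fin N → ℤ) (hY : Y ∈ Xcal N T (S - 1) (t + 1)) :
    ∑ Z ∈ Xcal N T S (t + 1), Ptp N T S t X Z * PSm N T S (t + 1) Z Y =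
      ∑ Z ∈ Xcal N T (S - 1) t, PSm N T S t X Z * Ptp N T (S - 1) t Z Y :=
  P_commutation_general N T S t hS1 X hX Y hY
end

section
/- The matrix P^S_{S→S+1} on Ω(N,T,S)×Ω(N,T,S+1), defined by P^S_{S→S+1}(X,Y) = ∏_{t=0}^{T-1} [P^{S+1,t}_{t+}(Y(t),Y(t+1))·P^{S+1,t+1}_{S-}(Y(t+1),X(t+1))] / (P^{S+1,t}_{t+}P^{S+1,t+1}_{S-})(Y(t),X(t+1)) when all denominators are positive and 0 otherwise, is stochastic: Σ_{Y ∈ Ω(N,T,S+1)} P^S_{S→S+1}(X,Y) = 1 for all X ∈ Ω(N,T,S). -/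
open Finset
open scoped Classical

/-- A family of paths in Ω(N,T,S), encoded by its sections X(0),…,X(T). -/
def isPath (N T S : ℕ) (X : ℕ → Fin N → ℤ) : Prop :=
  (∀ i : Fin N, X 0 i = (i : ℤ)) ∧
  (∀ i : Fin N, X T i = (S : ℤ) + i) ∧
  (∀ t < T, ∀ i, X (t + 1) i - X t i = 0 ∨ X (t + 1) i - X t i = 1) ∧
  (∀ t ≤ T, ∀ i j : Fin N, i < j → X t i < X t j)

/-- Extension of a finitely-indexed section family to ℕ. -/
def ext (N T : ℕ) (f : Fin (T + 1) → Fin N → ℤ) : ℕ → Fin N → ℤ :=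
  fun t => if h : t < T + 1 then f ⟨t, h⟩ else 0

/-- Ω(N,T,S) as a Finset (of section families indexed by Fin (T+1)). -/
noncomputable def OmegaF (N T S : ℕ) : Finset (Fin (T + 1) → Fin N → ℤ) :=
  (Fintype.piFinset fun _ => Fintype.piFinset fun _ => Finset.Icc (0 : ℤ) ((S : ℤ) + N)).filter
    (fun f => isPath N T S (ext N T f))

/-- The denominator (P^{S+1,t}_{t+}P^{S+1,t+1}_{S-})(Y(t),X(t+1)). -/
noncomputable def denom (N T S t : ℕ) (X Y : ℕ → Fin N → ℤ) : ℝ :=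
  ∑ Z ∈ Xcal N T (S + 1) (t + 1),
    Ptp N T (S + 1) t (Y t) Z * PSm N T (S + 1) (t + 1) Z (X (t + 1))

/-- The transition matrix P^S_{S→S+1}. -/
noncomputable def PS2 (N T S : ℕ) (X Y : ℕ → Fin N → ℤ) : ℝ :=
  if ∀ t < T, 0 < denom N T S t X Y then
    ∏ t ∈ Finset.range T,
      Ptp N T (S + 1) t (Y t) (Y (t + 1)) *
        PSm N T (S + 1) (t + 1) (Y (t + 1)) (X (t + 1)) / denom N T S t X Y
  else 0

/-! `P^S_{S→S+1}(X, ·)` is the law of a Markov chain in the time variable: given `Y(t)`, the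
next section is drawn with probability proportional to
`P^{S+1,t}_{t+}(Y(t), ·) P^{S+1,t+1}_{S-}(·, X(t+1))`, and the denominator is exactly the
normalising constant. Summing out `Y(T), Y(T-1), …, Y(1)` one at a time gives `1`, provided the
normalising constant is positive at every `Y(t)` reached with positive weight. Positive weight
forces each coordinate of `Y(t)` to be `X(t)` or `X(t) + 1`, and for such `Y(t)` an explicit next
section of positive weight exists. Sequences of sections that are not paths carry weight zero, so
the sum over `Ω(N,T,S+1)` is the sum over all sequences. -/

theorem Fintype.sum_piFinset_snoc {α M : Type*} [AddCommMonoid M] {n : ℕ}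
    (s : Fin (n + 1) → Finset α) (F : (Fin (n + 1) → α) → M) :
    ∑ W ∈ Fintype.piFinset s, F W =
      ∑ W ∈ Fintype.piFinset (Fin.init s), ∑ z ∈ s (Fin.last n), F (Fin.snoc W z) := by
  rw [← sum_product']
  refine sum_nbij' (fun W => (Fin.init W, W (Fin.last n))) (fun p => Fin.snoc p.1 p.2)
    ?_ ?_ ?_ ?_ ?_
  · intro W hW
    simp_all [Fintype.mem_piFinset, Fin.init]
  · rintro ⟨W, z⟩ h
    rw [mem_product] at h
    simpa [Fintype.mem_piFinset, Fin.forall_iff_castSucc, Fin.init] using h.symm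
  · intro W _; simp
  · intro p _; simp
  · intro W _; simp

section NormalizedChain

variable {α : Type*} {A : ℕ → Finset α} {a₀ : α} {good : ℕ → α → Prop}

theorem good_of_prod_ne_zero (hA₀ : A 0 = {a₀}) (h₀ : good 0 a₀) {g : ℕ → α → α → ℝ}
    (hg : ∀ t y z, g t y z ≠ 0 → good (t + 1) z) {n : ℕ} {W : Fin (n + 1) → α}
    (hW : W ∈ Fintype.piFinset fun t : Fin (n + 1) => A t)
    (hprod : ∏ t : Fin n, g t (W t.castSucc) (W t.succ) ≠ 0) (t : Fin (n + 1)) :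
    good t (W t) := by
  induction t using Fin.cases with
  | zero =>
    have hW₀ := Fintype.mem_piFinset.1 hW 0
    rw [Fin.val_zero, hA₀, mem_singleton] at hW₀
    rwa [hW₀]
  | succ s => exact hg s _ _ (prod_ne_zero_iff.1 hprod s (mem_univ s))

theorem sum_prod_normalized_eq_one (hA₀ : A 0 = {a₀}) (h₀ : good 0 a₀) {f : ℕ → α → α → ℝ}
    (hf : ∀ t y z, f t y z ≠ 0 → good (t + 1) z)
    {n : ℕ} (hpos : ∀ t < n, ∀ y ∈ A t, good t y → ∑ z ∈ A (t + 1), f t y z ≠ 0) :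
    ∑ W ∈ Fintype.piFinset (fun t : Fin (n + 1) => A t),
      ∏ t : Fin n, f t (W t.castSucc) (W t.succ) / ∑ z ∈ A (t + 1), f t (W t.castSucc) z = 1 := by
  induction n with
  | zero => simp [hA₀]
  | succ n ih =>
    rw [Fintype.sum_piFinset_snoc]
    refine (sum_congr rfl fun W hW => ?_).trans (ih fun t ht => hpos t (by omega))
    simp only [Fin.prod_univ_castSucc, Fin.snoc_castSucc, Fin.succ_castSucc, Fin.val_castSucc,
      Fin.succ_last, Fin.snoc_last, Fin.val_last, ← mul_sum, ← sum_div]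
    by_cases hprod : ∏ t : Fin n,
        f t (W t.castSucc) (W t.succ) / ∑ z ∈ A (t + 1), f t (W t.castSucc) z = 0
    · rw [hprod, zero_mul]
    · have hgood := good_of_prod_ne_zero hA₀ h₀
        (g := fun t y z => f t y z / ∑ z' ∈ A (t + 1), f t y z')
        (fun t y z h => hf t y z (div_ne_zero_iff.1 h).1) hW hprod (Fin.last n)
      rw [div_self (hpos n n.lt_succ_self _ (Fintype.mem_piFinset.1 hW (Fin.last n)) hgood),
        mul_one]

end NormalizedChain

theorem StrictMono.val_sub_le_sub {N : ℕ} {f : Fin N → ℤ} (hf : StrictMono f) {i j : Fin N}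
    (hij : i ≤ j) : (j : ℤ) - i ≤ f j - f i := by
  obtain ⟨k, hk⟩ := Nat.exists_eq_add_of_le (Fin.le_def.1 hij)
  induction k generalizing j with
  | zero => obtain rfl : i = j := Fin.ext (by omega); simp
  | succ k ih =>
    have hlt : (i : ℕ) + k < N := by omega
    have hprev := ih (j := ⟨i + k, hlt⟩) (Fin.le_def.2 (by simp)) rfl
    have hstep := hf (show (⟨i + k, hlt⟩ : Fin N) < j from Fin.lt_def.2 (by simp; omega))
    simp only at hprev
    push_cast at hprev
    omega

theorem StrictMono.eq_add_of_le_of_le {N : ℕ} {f : Fin N → ℤ} (hf : StrictMono f) {a : ℤ}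
    (hlo : ∀ i, a ≤ f i) (hhi : ∀ i, f i ≤ a + N - 1) (i : Fin N) : f i = a + i := by
  have hN : 0 < N := i.pos
  have h₀ := hf.val_sub_le_sub (show ⟨0, hN⟩ ≤ i from Fin.le_def.2 (Nat.zero_le _))
  have h₁ := hf.val_sub_le_sub (show i ≤ ⟨N - 1, by omega⟩ from Fin.le_def.2 (by simp; omega))
  have := hlo ⟨0, hN⟩
  have := hhi ⟨N - 1, by omega⟩
  simp only at h₀ h₁
  push_cast [Nat.cast_sub hN] at h₁
  omega

theorem poch_nonneg {a : ℝ} (ha : 0 ≤ a) (n : ℕ) : 0 ≤ poch a n :=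
  prod_nonneg fun k _ => by positivity

theorem poch_pos {a : ℝ} (ha : 0 < a) (n : ℕ) : 0 < poch a n :=
  prod_pos fun k _ => by positivity

theorem pairProd_pos {N : ℕ} {f : Fin N → ℤ} (hf : StrictMono f) : 0 < pairProd f :=
  prod_pos fun p hp => by
    have := hf (mem_filter.1 hp).2
    simpa using this

def IsStepUp {N : ℕ} (x y : Fin N → ℤ) : Prop := ∀ i, y i = x i ∨ y i = x i + 1

section Sections

variable {N T S t : ℕ}

theorem mem_Xcal_iff {f : Fin N → ℤ} :
    f ∈ Xcal N T S t ↔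
      (∀ i, 0 ≤ f i ∧ (t : ℤ) + S - T ≤ f i ∧ f i ≤ (t : ℤ) + N - 1 ∧ f i ≤ (S : ℤ) + N - 1) ∧
        StrictMono f := by
  simp only [Xcal, secX, mem_filter, Fintype.mem_piFinset, mem_Icc, max_le_iff, le_min_iff,
    and_assoc]
  exact and_congr Iff.rfl ⟨fun h _ _ => h _ _, fun h _ _ => @h _ _⟩

theorem le_of_mem_Xcal {f : Fin N → ℤ} (hf : f ∈ Xcal N T S t) (i : Fin N) :
    (t : ℤ) + S - T + i ≤ f i := by
  obtain ⟨hbounds, hmono⟩ := mem_Xcal_iff.1 hf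
  have hN : 0 < N := i.pos
  have hgap := hmono.val_sub_le_sub (show ⟨0, hN⟩ ≤ i from Fin.le_def.2 (Nat.zero_le _))
  have := (hbounds ⟨0, hN⟩).2.1
  simp only [Nat.cast_zero, sub_zero] at hgap
  omega

theorem Xcal_zero (hS : S ≤ T) : Xcal N T S 0 = {fun i : Fin N => (i : ℤ)} := by
  ext f
  rw [mem_singleton, mem_Xcal_iff]
  constructor
  · rintro ⟨hbounds, hmono⟩
    funext i
    simpa using hmono.eq_add_of_le_of_le (a := 0) (fun i => (hbounds i).1)
      (fun i => by have := (hbounds i).2.2.1; simpa using this) i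
  · rintro rfl
    refine ⟨fun i => ?_, fun i j hij => by simpa using hij⟩
    have := i.isLt
    dsimp only
    omega

theorem eq_of_mem_Xcal_self {f : Fin N → ℤ} (hf : f ∈ Xcal N T S T) :
    f = fun i : Fin N => (S : ℤ) + i := by
  obtain ⟨hbounds, hmono⟩ := mem_Xcal_iff.1 hf
  funext i
  exact hmono.eq_add_of_le_of_le (fun i => by have := (hbounds i).2.1; omega)
    (fun i => (hbounds i).2.2.2) i

end Sections

section Paths

variable {N T S : ℕ}

theorem isPath.apply_mem_Icc {X : ℕ → Fin N → ℤ} (hX : isPath N T S X) {a b : ℕ} (hab : a ≤ b)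
    (hb : b ≤ T) (i : Fin N) : X b i ∈ Icc (X a i) (X a i + (b - a : ℕ)) := by
  induction b, hab using Nat.le_induction with
  | base => simp
  | succ b hab ih =>
    have hprev := mem_Icc.1 (ih (by omega))
    have hstep := hX.2.2.1 b (by omega) i
    rw [mem_Icc]
    omega

theorem isPath.mem_Xcal {X : ℕ → Fin N → ℤ} (hX : isPath N T S X) {t : ℕ} (ht : t ≤ T) :
    X t ∈ Xcal N T S t := by
  refine mem_Xcal_iff.2 ⟨fun i => ?_, fun i j hij => hX.2.2.2 t ht i j hij⟩
  have h₀ := mem_Icc.1 (hX.apply_mem_Icc (Nat.zero_le t) ht i)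
  have hT := mem_Icc.1 (hX.apply_mem_Icc ht le_rfl i)
  have := hX.1 i
  have := hX.2.1 i
  have := i.isLt
  omega

theorem ext_apply_of_lt (Y : Fin (T + 1) → Fin N → ℤ) {t : ℕ} (ht : t < T + 1) :
    ext N T Y t = Y ⟨t, ht⟩ :=
  dif_pos ht

theorem mem_OmegaF_iff (hS : S ≤ T) {Y : Fin (T + 1) → Fin N → ℤ} :
    Y ∈ OmegaF N T S ↔
      (∀ t : Fin (T + 1), Y t ∈ Xcal N T S t) ∧
        ∀ t : Fin T, IsStepUp (Y t.castSucc) (Y t.succ) := by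
  rw [OmegaF, mem_filter]
  constructor
  · rintro ⟨-, hP⟩
    refine ⟨fun t => ?_, fun t i => ?_⟩
    · rw [← ext_apply_of_lt Y t.isLt]
      exact hP.mem_Xcal (Nat.lt_succ_iff.1 t.isLt)
    · have := hP.2.2.1 t t.isLt i
      rw [ext_apply_of_lt Y (by omega), ext_apply_of_lt Y (by omega)] at this
      change Y t.succ i - Y t.castSucc i = 0 ∨ Y t.succ i - Y t.castSucc i = 1 at this
      omega
  · rintro ⟨hmem, hstep⟩
    refine ⟨Fintype.mem_piFinset.2 fun t => Fintype.mem_piFinset.2 fun i => ?_, fun i => ?_,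
      fun i => ?_, fun t ht i => ?_, fun t ht => ?_⟩
    · have := (mem_Xcal_iff.1 (hmem t)).1 i
      rw [mem_Icc]
      omega
    · have h₀ := hmem 0
      rw [Fin.val_zero, Xcal_zero hS, mem_singleton] at h₀
      rw [ext_apply_of_lt Y (Nat.succ_pos T)]
      exact congrFun h₀ i
    · rw [ext_apply_of_lt Y (Nat.lt_succ_self T)]
      exact congrFun (eq_of_mem_Xcal_self (hmem (Fin.last T))) i
    · rw [ext_apply_of_lt Y (by omega), ext_apply_of_lt Y (by omega)]
      have := hstep ⟨t, ht⟩ i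
      change Y ⟨t + 1, _⟩ i = Y ⟨t, _⟩ i ∨ Y ⟨t + 1, _⟩ i = Y ⟨t, _⟩ i + 1 at this
      omega
    · rw [ext_apply_of_lt Y (by omega)]
      exact (mem_Xcal_iff.1 (hmem ⟨t, by omega⟩)).2

end Paths

section Kernels

variable {N T S t : ℕ}

theorem isStepUp_of_Ptp_ne_zero {y z : Fin N → ℤ} (h : Ptp N T S t y z ≠ 0) : IsStepUp y z := by
  by_contra hc
  exact h (if_neg hc)

theorem isStepUp_of_PSm_ne_zero {z x : Fin N → ℤ} (h : PSm N T S t z x ≠ 0) : IsStepUp x z := by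
  intro i
  by_contra hc
  refine h (if_neg fun hall => ?_)
  have := hall i
  omega

theorem Ptp_nonneg (ht : t ≤ T) {y z : Fin N → ℤ} (hy : y ∈ Xcal N T S t) (hz : StrictMono z) :
    0 ≤ Ptp N T S t y z := by
  obtain ⟨hbounds, hmono⟩ := mem_Xcal_iff.1 hy
  have hT : (0 : ℝ) ≤ T - t := sub_nonneg.2 (by exact_mod_cast ht)
  rw [Ptp]
  split_ifs
  · refine div_nonneg (mul_nonneg (pairProd_pos hz).le (prod_nonneg fun i _ => ?_))
      (mul_nonneg (poch_nonneg hT N) (pairProd_pos hmono).le)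
    obtain ⟨-, hlo, -, hhi⟩ := hbounds i
    split_ifs
    · have : (y i : ℝ) ≤ S + N - 1 := by exact_mod_cast hhi
      linarith
    · have : (t : ℝ) + S - T ≤ y i := by exact_mod_cast hlo
      linarith
  · rfl

theorem PSm_nonneg {z x : Fin N → ℤ} (hz : z ∈ Xcal N T S t) (hx : StrictMono x) :
    0 ≤ PSm N T S t z x := by
  obtain ⟨hbounds, hmono⟩ := mem_Xcal_iff.1 hz
  rw [PSm]
  split_ifs
  · refine div_nonneg (mul_nonneg (pairProd_pos hx).le (prod_nonneg fun i _ => ?_))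
      (mul_nonneg (poch_nonneg (Nat.cast_nonneg S) N) (pairProd_pos hmono).le)
    obtain ⟨hlo, -, -, hhi⟩ := hbounds i
    split_ifs
    · exact_mod_cast hlo
    · have : (z i : ℝ) ≤ S + N - 1 := by exact_mod_cast hhi
      linarith
  · rfl

theorem Ptp_pos (ht : t < T) {y z : Fin N → ℤ} (hy : StrictMono y) (hz : StrictMono z)
    (hyz : IsStepUp y z) (hup : ∀ i, z i = y i + 1 → y i < (S : ℤ) + N - 1)
    (hstay : ∀ i, z i = y i → (t : ℤ) + S - T < y i) : 0 < Ptp N T S t y z := by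
  have hT : (0 : ℝ) < T - t := sub_pos.2 (by exact_mod_cast ht)
  rw [Ptp, if_pos (show ∀ i, z i = y i ∨ z i = y i + 1 from hyz)]
  refine div_pos (mul_pos (pairProd_pos hz) (prod_pos fun i _ => ?_))
    (mul_pos (poch_pos hT N) (pairProd_pos hy))
  split_ifs with h
  · have : (y i : ℝ) < S + N - 1 := by exact_mod_cast hup i h
    linarith
  · have : (t : ℝ) + S - T < y i := by exact_mod_cast hstay i (by have := hyz i; omega)
    linarith

theorem PSm_pos (hS : 0 < S) {z x : Fin N → ℤ} (hz : StrictMono z) (hx : StrictMono x)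
    (hxz : IsStepUp x z) (hdown : ∀ i, z i = x i + 1 → 0 < z i)
    (hstay : ∀ i, z i = x i → z i < (S : ℤ) + N - 1) : 0 < PSm N T S t z x := by
  rw [PSm, if_pos fun i => by have := hxz i; omega]
  refine div_pos (mul_pos (pairProd_pos hx) (prod_pos fun i _ => ?_))
    (mul_pos (poch_pos (by exact_mod_cast hS) N) (pairProd_pos hz))
  split_ifs with h
  · exact_mod_cast hdown i (by omega)
  · have : (z i : ℝ) < S + N - 1 := by exact_mod_cast hstay i (by have := hxz i; omega)
    linarith

end Kernels

noncomputable def stepWeight (N T S : ℕ) (X : ℕ → Fin N → ℤ) (t : ℕ) (y z : Fin N → ℤ) : ℝ :=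
  Ptp N T (S + 1) t y z * PSm N T (S + 1) (t + 1) z (X (t + 1))

section StepWeight

variable {N T S : ℕ} {X : ℕ → Fin N → ℤ}

theorem isStepUp_of_stepWeight_ne_zero {t : ℕ} {y z : Fin N → ℤ}
    (h : stepWeight N T S X t y z ≠ 0) : IsStepUp (X (t + 1)) z :=
  isStepUp_of_PSm_ne_zero (right_ne_zero_of_mul h)

theorem isPath.sum_stepWeight_pos (hX : isPath N T S X) {t : ℕ} (ht : t < T) {y : Fin N → ℤ}
    (hy : y ∈ Xcal N T (S + 1) t) (hXy : IsStepUp (X t) y) :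
    0 < ∑ z ∈ Xcal N T (S + 1) (t + 1), stepWeight N T S X t y z := by
  obtain ⟨hyb, hymono⟩ := mem_Xcal_iff.1 hy
  have hXt : X (t + 1) ∈ Xcal N T S (t + 1) := hX.mem_Xcal ht
  obtain ⟨hXb, hXmono⟩ := mem_Xcal_iff.1 hXt
  -- The term `t + S + 2 - T + i`, strictly increasing in `i` like `y` and `X (t + 1)`, moves `Z i`
  -- off `y i` when `y i` is at the lower boundary `t + S + 1 - T`, where the factor of `Ptp` for a
  -- coordinate that stays put vanishes.
  obtain ⟨Z, hZ⟩ : ∃ Z : Fin N → ℤ,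
      ∀ i, Z i = max (max (y i) (X (t + 1) i)) ((t : ℤ) + S + 2 - T + i) := ⟨_, fun i => rfl⟩
  have bounds (i : Fin N) :=
    And.intro (hyb i) <| And.intro (hXb i) <| And.intro (le_of_mem_Xcal hy i) <|
      And.intro (le_of_mem_Xcal hXt i) <| And.intro (hXy i) <| And.intro (hX.2.2.1 t ht i) <|
        And.intro (hZ i) i.isLt
  push_cast at bounds
  have hZmono : StrictMono Z := fun i j hij => by
    have := hymono hij
    have := hXmono hij
    have : (i : ℤ) < j := by exact_mod_cast hij
    have := bounds i
    have := bounds j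
    omega
  have hZmem : Z ∈ Xcal N T (S + 1) (t + 1) :=
    mem_Xcal_iff.2 ⟨fun i => by have := bounds i; push_cast; omega, hZmono⟩
  have hPtp : 0 < Ptp N T (S + 1) t y Z :=
    Ptp_pos ht hymono hZmono (fun i => by have := bounds i; omega)
      (fun i _ => by have := bounds i; push_cast; omega)
      (fun i _ => by have := bounds i; push_cast; omega)
  have hPSm : 0 < PSm N T (S + 1) (t + 1) Z (X (t + 1)) :=
    PSm_pos S.succ_pos hZmono hXmono (fun i => by have := bounds i; omega)
      (fun i _ => by have := bounds i; omega)
      (fun i _ => by have := bounds i; push_cast; omega)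
  refine (mul_pos hPtp hPSm).trans_le
    (single_le_sum (f := stepWeight N T S X t y) (fun z hz => ?_) hZmem)
  exact mul_nonneg (Ptp_nonneg ht.le hy (mem_Xcal_iff.1 hz).2) (PSm_nonneg hz hXmono)

theorem PS2_ext_eq (hS : S + 1 ≤ T) (hX : isPath N T S X) {Y : Fin (T + 1) → Fin N → ℤ}
    (hY : Y ∈ Fintype.piFinset fun t : Fin (T + 1) => Xcal N T (S + 1) t) :
    PS2 N T S X (ext N T Y) =
      ∏ t : Fin T, stepWeight N T S X t (Y t.castSucc) (Y t.succ) /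
        ∑ z ∈ Xcal N T (S + 1) (t + 1), stepWeight N T S X t (Y t.castSucc) z := by
  have hprod : ∏ t ∈ range T, Ptp N T (S + 1) t (ext N T Y t) (ext N T Y (t + 1)) *
      PSm N T (S + 1) (t + 1) (ext N T Y (t + 1)) (X (t + 1)) / denom N T S t X (ext N T Y) =
      ∏ t : Fin T, stepWeight N T S X t (Y t.castSucc) (Y t.succ) /
        ∑ z ∈ Xcal N T (S + 1) (t + 1), stepWeight N T S X t (Y t.castSucc) z := by
    rw [← Fin.prod_univ_eq_prod_range]
    refine prod_congr rfl fun t _ => ?_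
    rw [denom, ext_apply_of_lt Y (t := t) (by omega), ext_apply_of_lt Y (t := t + 1) (by omega)]
    rfl
  rw [PS2, hprod]
  split_ifs with hden
  · rfl
  by_contra hne
  refine hden fun t ht => ?_
  have hgood := good_of_prod_ne_zero (A := fun t => Xcal N T (S + 1) t)
    (good := fun t y => IsStepUp (X t) y) (Xcal_zero (by omega)) (fun i => .inl (hX.1 i).symm)
    (g := fun t y z =>
      stepWeight N T S X t y z / ∑ z' ∈ Xcal N T (S + 1) (t + 1), stepWeight N T S X t y z')
    (fun t y z h => isStepUp_of_stepWeight_ne_zero (div_ne_zero_iff.1 h).1) hY (Ne.symm hne)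
    ⟨t, by omega⟩
  rw [denom, ext_apply_of_lt Y (by omega)]
  exact hX.sum_stepWeight_pos ht (Fintype.mem_piFinset.1 hY ⟨t, by omega⟩) hgood

end StepWeight

theorem PS2_stochastic_general (N T S : ℕ) (hS : S + 1 ≤ T)
    (X : ℕ → Fin N → ℤ) (hX : isPath N T S X) :
    ∑ Y ∈ OmegaF N T (S + 1), PS2 N T S X (ext N T Y) = 1 := by
  have hΩ : OmegaF N T (S + 1) =
      (Fintype.piFinset fun t : Fin (T + 1) => Xcal N T (S + 1) t).filter
        fun Y => ∀ t : Fin T, IsStepUp (Y t.castSucc) (Y t.succ) := by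
    ext Y
    rw [mem_filter, mem_OmegaF_iff hS, Fintype.mem_piFinset]
  rw [hΩ, sum_filter_of_ne, sum_congr rfl fun Y hY => PS2_ext_eq hS hX hY]
  · exact sum_prod_normalized_eq_one (A := fun t => Xcal N T (S + 1) t)
      (good := fun t y => IsStepUp (X t) y) (f := stepWeight N T S X)
      (Xcal_zero (by omega)) (fun i => .inl (hX.1 i).symm)
      (fun t y z h => isStepUp_of_stepWeight_ne_zero h)
      (fun t ht y hy hXy => (hX.sum_stepWeight_pos ht hy hXy).ne')
  · intro Y hY hne t
    rw [PS2_ext_eq hS hX hY] at hne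
    exact isStepUp_of_Ptp_ne_zero (left_ne_zero_of_mul
      (div_ne_zero_iff.1 (prod_ne_zero_iff.1 hne t (mem_univ t))).1)

/-- P^S_{S→S+1} is a stochastic matrix on Ω(N,T,S) × Ω(N,T,S+1). -/
theorem PS2_stochastic (N T S : ℕ) (hN : 1 ≤ N) (hS : S + 1 ≤ T)
    (X : ℕ → Fin N → ℤ) (hX : isPath N T S X) :
    ∑ Y ∈ OmegaF N T (S + 1), PS2 N T S X (ext N T Y) = 1 :=
  PS2_stochastic_general N T S hS X hX
end
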